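/- Let 0 < ν < 1, μ < 1 and let f_{ν,μ}(t) = (1/π)∫_0^∞ u^{-μ} e^{-ut - u^ν cos(πν)} sin(u^ν sin(πν) + πμ) du. Then f_{ν,μ}(t) → 0 as t → ∞, and moreover t^{1-μ} f_{ν,μ}(t) → 1/Γ(μ) as t → ∞ (where 1/Γ(μ) = 0 if μ is a nonpositive integer). -/

import Mathlib

/-!
Substituting `u = s v` with `s = 1 / t` gives `t ^ (1 - μ) fInv ν μ t = π⁻¹ ∫₀^∞ K(s, v) dv`,
where `K(s, v) = v ^ (-μ) exp (-v - (s v) ^ ν cos πν) sin ((s v) ^ ν sin πν + πμ)`.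
As `s → 0⁺` the kernel tends to `v ^ (-μ) e ^ (-v) sin πμ`, and since `(s v) ^ ν ≤ 1 + s v`
it is dominated for `s ≤ 1/2` by `e v ^ (-μ) e ^ (-v/2)`, which is integrable because `μ < 1`.
The limit integral is `Γ(1 - μ) sin πμ`, which Euler's reflection formula turns into `π / Γ(μ)`.
Finally `fInv ν μ t = t ^ (μ - 1) (t ^ (1 - μ) fInv ν μ t) → 0`.
-/

open Real MeasureTheory Set Filter

noncomputable def fInv (ν μ t : ℝ) : ℝ :=
  (1 / π) * ∫ u in Ioi (0 : ℝ),
    u ^ (-μ) * Real.exp (-u * t - u ^ ν * Real.cos (π * ν)) *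
      Real.sin (u ^ ν * Real.sin (π * ν) + π * μ)

open Topology

noncomputable def fInvKernel (ν μ s v : ℝ) : ℝ :=
  v ^ (-μ) * exp (-v - (s * v) ^ ν * cos (π * ν)) * sin ((s * v) ^ ν * sin (π * ν) + π * μ)

lemma rpow_le_one_add_self {x p : ℝ} (hx : 0 ≤ x) (hp0 : 0 ≤ p) (hp1 : p ≤ 1) :
    x ^ p ≤ 1 + x := by
  have bernoulli := rpow_one_add_le_one_add_mul_self (s := x - 1) (by linarith) hp0 hp1
  rw [add_sub_cancel] at bernoulli
  nlinarith

lemma rpow_mul_fInv_eq_integral_fInvKernel (ν μ : ℝ) {t : ℝ} (ht : 0 < t) :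
    t ^ (1 - μ) * fInv ν μ t = π⁻¹ * ∫ v in Ioi 0, fInvKernel ν μ t⁻¹ v := by
  set g : ℝ → ℝ := fun u =>
    u ^ (-μ) * exp (-u * t - u ^ ν * cos (π * ν)) * sin (u ^ ν * sin (π * ν) + π * μ)
  have hsubst : ∫ v in Ioi 0, g (t⁻¹ * v) = t * ∫ u in Ioi 0, g u := by
    simpa using integral_comp_mul_left_Ioi g 0 (inv_pos.mpr ht)
  have hg : ∀ v ∈ Ioi (0 : ℝ), g (t⁻¹ * v) = t ^ μ * fInvKernel ν μ t⁻¹ v := by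
    intro v hv
    have hpow : (t⁻¹ * v) ^ (-μ) = t ^ μ * v ^ (-μ) := by
      rw [mul_rpow (inv_nonneg.mpr ht.le) (le_of_lt hv), inv_rpow ht.le, ← rpow_neg ht.le,
        neg_neg]
    have hlin : -(t⁻¹ * v) * t = -v := by field_simp
    simp only [g, fInvKernel, hpow, hlin]
    ring
  rw [setIntegral_congr_fun measurableSet_Ioi hg, integral_const_mul] at hsubst
  have hkernel : ∫ v in Ioi 0, fInvKernel ν μ t⁻¹ v = t ^ (1 - μ) * ∫ u in Ioi 0, g u := by
    rw [rpow_sub ht, rpow_one, div_mul_eq_mul_div, ← hsubst]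
    field_simp [(rpow_pos_of_pos ht μ).ne']
  rw [hkernel, fInv]
  ring

lemma abs_fInvKernel_le (μ : ℝ) {ν s v : ℝ} (hν0 : 0 ≤ ν) (hν1 : ν ≤ 1) (hs0 : 0 ≤ s)
    (hs : s ≤ 1 / 2) (hv : 0 ≤ v) :
    |fInvKernel ν μ s v| ≤ exp 1 * (v ^ (-μ) * exp (-(1 / 2) * v)) := by
  have hsv : 0 ≤ s * v := mul_nonneg hs0 hv
  have hdrift : -((s * v) ^ ν * cos (π * ν)) ≤ 1 + v / 2 := by
    have hcos := neg_one_le_cos (π * ν)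
    have hpow := rpow_le_one_add_self hsv hν0 hν1
    nlinarith [rpow_nonneg hsv ν]
  calc |fInvKernel ν μ s v|
      ≤ v ^ (-μ) * exp (-v - (s * v) ^ ν * cos (π * ν)) * 1 := by
        rw [fInvKernel, abs_mul, abs_mul, abs_of_nonneg (rpow_nonneg hv _),
          abs_of_pos (exp_pos _)]
        gcongr
        exact abs_sin_le_one _
    _ ≤ v ^ (-μ) * exp (1 + -(1 / 2) * v) := by
        rw [mul_one]
        gcongr
        linarith
    _ = exp 1 * (v ^ (-μ) * exp (-(1 / 2) * v)) := by
        rw [exp_add]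
        ring

lemma tendsto_integral_fInvKernel {ν μ : ℝ} (hν0 : 0 ≤ ν) (hν1 : ν ≤ 1) (hμ : μ < 1) :
    Tendsto (fun s => ∫ v in Ioi 0, fInvKernel ν μ s v) (𝓝[≥] 0)
      (𝓝 (∫ v in Ioi 0, fInvKernel ν μ 0 v)) := by
  refine tendsto_integral_filter_of_dominated_convergence
    (fun v => exp 1 * (v ^ (-μ) * exp (-(1 / 2) * v))) ?_ ?_ ?_ ?_
  · refine Eventually.of_forall fun s => (Measurable.aestronglyMeasurable ?_)
    unfold fInvKernel
    fun_prop
  · filter_upwards [Ico_mem_nhdsGE (by norm_num : (0 : ℝ) < 1 / 2)] with s ⟨hs0, hs⟩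
    filter_upwards [ae_restrict_mem measurableSet_Ioi] with v hv
    exact abs_fInvKernel_le μ hν0 hν1 hs0 hs.le (le_of_lt hv)
  · have := integrableOn_rpow_mul_exp_neg_mul_rpow (by linarith : -1 < -μ) one_pos
      (by norm_num : (0 : ℝ) < 1 / 2)
    simpa [rpow_one, IntegrableOn] using this.const_mul (exp 1)
  · refine Eventually.of_forall fun v => tendsto_nhdsWithin_of_tendsto_nhds ?_
    have hpow : Continuous fun s : ℝ => (s * v) ^ ν :=
      (continuous_rpow_const hν0).comp (continuous_mul_const v)
    have hcont : Continuous fun s => fInvKernel ν μ s v := by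
      unfold fInvKernel
      fun_prop
    exact hcont.tendsto 0

lemma integral_fInvKernel_zero {ν μ : ℝ} (hν : ν ≠ 0) (hμ : μ < 1) :
    ∫ v in Ioi 0, fInvKernel ν μ 0 v = Gamma (1 - μ) * sin (π * μ) := by
  rw [Gamma_eq_integral (by linarith), ← integral_mul_const]
  refine setIntegral_congr_fun measurableSet_Ioi fun v _ => ?_
  simp only [fInvKernel, zero_mul, zero_rpow hν, sub_zero, zero_add]
  ring_nf

lemma inv_pi_mul_Gamma_one_sub_mul_sin {s : ℝ} (hs : Gamma (1 - s) ≠ 0) :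
    π⁻¹ * (Gamma (1 - s) * sin (π * s)) = 1 / Gamma s := by
  have hreflection := congrArg (·⁻¹) (Gamma_mul_Gamma_one_sub s)
  simp only [mul_inv, inv_div] at hreflection
  rw [one_div, ← inv_mul_cancel_right₀ hs (Gamma s)⁻¹, hreflection]
  ring

theorem fInv_asymptotics (ν μ : ℝ) (hν0 : 0 < ν) (hν1 : ν < 1) (hμ : μ < 1) :
    Tendsto (fun t => fInv ν μ t) atTop (nhds 0) ∧
    Tendsto (fun t => t ^ (1 - μ) * fInv ν μ t) atTop (nhds (1 / Real.Gamma μ)) := by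
  have hscaled : Tendsto (fun t => t ^ (1 - μ) * fInv ν μ t) atTop (𝓝 (1 / Gamma μ)) := by
    have hinv : Tendsto (fun t : ℝ => t⁻¹) atTop (𝓝[≥] 0) :=
      tendsto_inv_atTop_nhdsGT_zero.mono_right (nhdsWithin_mono _ Ioi_subset_Ici_self)
    have hlim := ((tendsto_integral_fInvKernel hν0.le hν1.le hμ).comp hinv).const_mul π⁻¹
    rw [integral_fInvKernel_zero hν0.ne' hμ,
      inv_pi_mul_Gamma_one_sub_mul_sin (Gamma_pos_of_pos (by linarith)).ne'] at hlim
    refine hlim.congr' ?_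
    filter_upwards [eventually_gt_atTop 0] with t ht
    exact (rpow_mul_fInv_eq_integral_fInvKernel ν μ ht).symm
  refine ⟨?_, hscaled⟩
  have hdecay : Tendsto (fun t : ℝ => t ^ (-(1 - μ))) atTop (𝓝 0) :=
    tendsto_rpow_neg_atTop (by linarith)
  refine (zero_mul (1 / Gamma μ) ▸ hdecay.mul hscaled).congr' ?_
  filter_upwards [eventually_gt_atTop 0] with t ht
  rw [← mul_assoc, ← rpow_add ht, neg_add_cancel, rpow_zero, one_mul]
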